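/- arXiv:2202.06321 — 2 statements merged into one kernel-verified Lean document; each statement's English description precedes it below -/
import Mathlib

section
/- Let $U^+,U^-\subset\mathbb{R}^{n+1}$ be bounded measurable sets with positive measure, $0<q\le 1$, and $f\in L^q(U^+\cup U^-)$. Then there exists a constant $c_0\in\mathbb{R}$ attaining the infimum $\inf_{c\in\mathbb{R}}\left(\Xint-_{U^+}(f-c)_+^q + \Xint-_{U^-}(f-c)_-^q\right)$, i.e., the infimum over $c\in\mathbb{R}$ of the sum of the average of the $q$-th power of the positive part of $f-c$ over $U^+$ and the average of the $q$-th power of the negative part of $f-c$ over $U^-$ is attained at some real number $c_0$. -/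
/-!
For `0 < q`, the map `c ↦ (f - c)₊ ^ q` is antitone in `c`, so near `c₀` it is dominated by its
value at `c₀ - 1`, which is integrable on a finite measure space when `f ∈ L^q`; dominated
convergence makes both averages continuous in `c`. On a set of positive measure where `f > -K`,
the first average is at least a positive multiple of `(-K - c) ^ q`, so it tends to `+∞` as
`c → -∞`; symmetrically the second tends to `+∞` as `c → +∞`, while both are nonnegative. A
continuous function on `ℝ` tending to `+∞` along the cocompact filter attains its minimum.
-/

open MeasureTheory Set Filter

namespace MeasureTheory

variable {α : Type*} [MeasurableSpace α] {μ ν : Measure α} {f : α → ℝ} {q : ℝ}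

theorem MemLp.integrable_posPart_sub_rpow [IsFiniteMeasure μ]
    (hf : MemLp f (ENNReal.ofReal q) μ) (hq : 0 < q) (c : ℝ) :
    Integrable (fun x => max (f x - c) 0 ^ q) μ := by
  simpa [ENNReal.toReal_ofReal hq.le, Real.norm_of_nonneg (le_max_right _ _)] using
    (hf.sub (memLp_const c)).pos_part.integrable_norm_rpow
      (ENNReal.ofReal_pos.mpr hq).ne' ENNReal.ofReal_ne_top

theorem continuous_integral_posPart_sub_rpow [IsFiniteMeasure μ]
    (hf : MemLp f (ENNReal.ofReal q) μ) (hq : 0 < q) :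
    Continuous fun c => ∫ x, max (f x - c) 0 ^ q ∂μ := by
  refine continuous_iff_continuousAt.2 fun c₀ => ?_
  refine continuousAt_of_dominated
    (Eventually.of_forall fun c => (hf.integrable_posPart_sub_rpow hq c).aestronglyMeasurable)
    ?_ (hf.integrable_posPart_sub_rpow hq (c₀ - 1)) (ae_of_all _ fun x => ?_)
  · filter_upwards [Ioi_mem_nhds (sub_one_lt c₀)] with c hc
    refine ae_of_all _ fun x => ?_
    rw [Real.norm_of_nonneg (by positivity)]
    gcongr
    exact hc.le
  · fun_prop (disch := exact hq.le)

theorem tendsto_integral_posPart_sub_rpow_atBot [IsFiniteMeasure μ] (hμ : μ ≠ 0)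
    (hf : MemLp f (ENNReal.ofReal q) μ) (hq : 0 < q) :
    Tendsto (fun c => ∫ x, max (f x - c) 0 ^ q ∂μ) atBot atTop := by
  obtain ⟨K, hK⟩ : ∃ K : ℕ, 0 < μ {x | -(K : ℝ) < f x} := by
    have hcover : (⋃ K : ℕ, {x | -(K : ℝ) < f x}) = univ :=
      iUnion_eq_univ_iff.2 fun x => (exists_nat_gt (-f x)).imp fun _ h => neg_lt.1 h
    refine exists_measure_pos_of_not_measure_iUnion_null ?_
    rw [hcover]
    exact Measure.measure_univ_ne_zero.2 hμ
  set S := {x | -(K : ℝ) < f x}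
  have hS : NullMeasurableSet S μ := nullMeasurableSet_lt aemeasurable_const hf.1.aemeasurable
  have hlower : ∀ c ≤ -(K : ℝ),
      (-K - c) ^ q * μ.real S ≤ ∫ x, max (f x - c) 0 ^ q ∂μ := fun c hc =>
    calc (-K - c) ^ q * μ.real S = ∫ _ in S, (-K - c) ^ q ∂μ := by
          rw [setIntegral_const, smul_eq_mul, mul_comm]
      _ ≤ ∫ x in S, max (f x - c) 0 ^ q ∂μ :=
          setIntegral_mono_on₀ (integrableOn_const (measure_ne_top μ S))
            (hf.integrable_posPart_sub_rpow hq c).integrableOn hS fun x hx => by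
              gcongr
              exact le_max_of_le_left (by linarith [show -(K : ℝ) < f x from hx])
      _ ≤ ∫ x, max (f x - c) 0 ^ q ∂μ :=
          setIntegral_le_integral (hf.integrable_posPart_sub_rpow hq c)
            (ae_of_all _ fun x => by positivity)
  refine tendsto_atTop_mono' atBot ((eventually_le_atBot _).mono hlower) ?_
  refine ((tendsto_rpow_atTop hq).comp ?_).atTop_mul_const
    (ENNReal.toReal_pos hK.ne' (measure_ne_top μ S))
  exact tendsto_atTop_add_const_left _ _ tendsto_neg_atBot_atTop

theorem continuous_average_posPart_sub_rpow [IsFiniteMeasure μ]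
    (hf : MemLp f (ENNReal.ofReal q) μ) (hq : 0 < q) :
    Continuous fun c => ⨍ x, max (f x - c) 0 ^ q ∂μ := by
  simp only [average_eq, smul_eq_mul]
  exact continuous_const.mul (continuous_integral_posPart_sub_rpow hf hq)

theorem tendsto_average_posPart_sub_rpow_atBot [IsFiniteMeasure μ] (hμ : μ ≠ 0)
    (hf : MemLp f (ENNReal.ofReal q) μ) (hq : 0 < q) :
    Tendsto (fun c => ⨍ x, max (f x - c) 0 ^ q ∂μ) atBot atTop := by
  simp only [average_eq, smul_eq_mul]
  exact (tendsto_integral_posPart_sub_rpow_atBot hμ hf hq).const_mul_atTop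
    (inv_pos.2 (ENNReal.toReal_pos (Measure.measure_univ_ne_zero.2 hμ) (measure_ne_top μ _)))

theorem exists_forall_average_posPart_sub_rpow_add_average_negPart_sub_rpow_le
    [IsFiniteMeasure μ] [IsFiniteMeasure ν] (hμ : μ ≠ 0) (hν : ν ≠ 0)
    (hfμ : MemLp f (ENNReal.ofReal q) μ) (hfν : MemLp f (ENNReal.ofReal q) ν) (hq : 0 < q) :
    ∃ c₀ : ℝ, ∀ c : ℝ,
      (⨍ x, max (f x - c₀) 0 ^ q ∂μ) + (⨍ x, max (c₀ - f x) 0 ^ q ∂ν) ≤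
      (⨍ x, max (f x - c) 0 ^ q ∂μ) + (⨍ x, max (c - f x) 0 ^ q ∂ν) := by
  have hneg : (fun c => ⨍ x, max (c - f x) 0 ^ q ∂ν) =
      (fun c => ⨍ x, max ((-f) x - c) 0 ^ q ∂ν) ∘ Neg.neg := by
    ext c
    simp only [Function.comp_apply, Pi.neg_apply, neg_sub_neg]
  have hnonneg : ∀ (ρ : Measure α) (g : α → ℝ), 0 ≤ ⨍ x, max (g x) 0 ^ q ∂ρ := fun ρ g =>
    integral_nonneg fun x => by positivity
  refine Continuous.exists_forall_le
    ((continuous_average_posPart_sub_rpow hfμ hq).add ?_) ?_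
  · rw [hneg]
    exact (continuous_average_posPart_sub_rpow hfν.neg hq).comp continuous_neg
  rw [cocompact_eq_atBot_atTop, tendsto_sup]
  refine ⟨(tendsto_average_posPart_sub_rpow_atBot hμ hfμ hq).atTop_add_nonneg
      fun c => hnonneg ν (fun x => c - f x), Tendsto.nonneg_add_atTop
      (fun c => hnonneg μ (fun x => f x - c)) ?_⟩
  rw [hneg]
  exact (tendsto_average_posPart_sub_rpow_atBot hν hfν.neg hq).comp tendsto_neg_atTop_atBot

end MeasureTheory

theorem stmt8_general {n : ℕ} (Up Um : Set (Fin (n+1) → ℝ))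
    (hUpb : Bornology.IsBounded Up) (hUmb : Bornology.IsBounded Um)
    (hUp0 : 0 < volume Up) (hUm0 : 0 < volume Um)
    (q : ℝ) (hq0 : 0 < q)
    (f : (Fin (n+1) → ℝ) → ℝ)
    (hf : MemLp f (ENNReal.ofReal q) (volume.restrict (Up ∪ Um))) :
    ∃ c₀ : ℝ, ∀ c : ℝ,
      (⨍ x in Up, max (f x - c₀) 0 ^ q) + (⨍ x in Um, max (c₀ - f x) 0 ^ q) ≤
      (⨍ x in Up, max (f x - c) 0 ^ q) + (⨍ x in Um, max (c - f x) 0 ^ q) := by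
  have : IsFiniteMeasure (volume.restrict Up) :=
    isFiniteMeasure_restrict.2 hUpb.measure_lt_top.ne
  have : IsFiniteMeasure (volume.restrict Um) :=
    isFiniteMeasure_restrict.2 hUmb.measure_lt_top.ne
  exact exists_forall_average_posPart_sub_rpow_add_average_negPart_sub_rpow_le
    (Measure.restrict_eq_zero.not.2 hUp0.ne') (Measure.restrict_eq_zero.not.2 hUm0.ne')
    (hf.mono_measure (Measure.restrict_mono subset_union_left le_rfl))
    (hf.mono_measure (Measure.restrict_mono subset_union_right le_rfl)) hq0

theorem stmt8 {n : ℕ} (Up Um : Set (Fin (n+1) → ℝ))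
    (hUpm : MeasurableSet Up) (hUmm : MeasurableSet Um)
    (hUpb : Bornology.IsBounded Up) (hUmb : Bornology.IsBounded Um)
    (hUp0 : 0 < volume Up) (hUm0 : 0 < volume Um)
    (q : ℝ) (hq0 : 0 < q) (hq1 : q ≤ 1)
    (f : (Fin (n+1) → ℝ) → ℝ)
    (hf : MemLp f (ENNReal.ofReal q) (volume.restrict (Up ∪ Um))) :
    ∃ c₀ : ℝ, ∀ c : ℝ,
      (⨍ x in Up, max (f x - c₀) 0 ^ q) + (⨍ x in Um, max (c₀ - f x) 0 ^ q) ≤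
      (⨍ x in Up, max (f x - c) 0 ^ q) + (⨍ x in Um, max (c - f x) 0 ^ q) :=
  stmt8_general Up Um hUpb hUmb hUp0 hUm0 q hq0 f hf
end

section
/- Let $U^+,U^-\subset\mathbb{R}^{n+1}$ be measurable sets with finite positive measure and $0<q<\infty$. For measurable $f,g$ and constants $c^f,c^g\in\mathbb{R}$, the oscillation functional $\mathcal{O}(h,c)=\left(\Xint-_{U^+}(h-c)_+^q+\Xint-_{U^-}(h-c)_-^q\right)^{1/q}$ satisfies $\mathcal{O}(\max\{f,g\},\max\{c^f,c^g\})\le\max\{1,2^{\frac1q-1}\}\left(\mathcal{O}(f,c^f)+\mathcal{O}(g,c^g)\right)$, provided $f,g\in L^q(U^+\cup U^-)$. -/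
/-!
Pointwise, `max a b - max c d ≤ max (a - c) (b - d)`; applied once to `(f, g, cᶠ, cᵍ)` and
once to `(cᶠ, cᵍ, f, g)` it bounds both the positive and the negative part of the oscillation
of `max f g` by the maximum of those of `f` and `g`, hence their `q`-th powers by the sum.
Averaging, `𝒪(max f g, max cᶠ cᵍ)^q ≤ 𝒪(f, cᶠ)^q + 𝒪(g, cᵍ)^q`, and taking `q`-th roots costs
the factor `max 1 (2^(1/q - 1))` of the quasi-triangle inequality
`(a + b)^r ≤ max 1 (2^(r-1)) (a^r + b^r)`.
-/

open MeasureTheory Set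
open scoped NNReal

theorem rpow_add_le_max_mul_rpow_add_rpow {a b : ℝ} (ha : 0 ≤ a) (hb : 0 ≤ b) {r : ℝ}
    (hr : 0 ≤ r) : (a + b) ^ r ≤ max 1 (2 ^ (r - 1)) * (a ^ r + b ^ r) := by
  lift a to ℝ≥0 using ha
  lift b to ℝ≥0 using hb
  rcases le_total r 1 with hr1 | hr1
  · calc ((a : ℝ) + b) ^ r ≤ (a : ℝ) ^ r + (b : ℝ) ^ r :=
          mod_cast NNReal.rpow_add_le_add_rpow a b hr hr1
      _ ≤ _ := le_mul_of_one_le_left (by positivity) (le_max_left _ _)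
  · calc ((a : ℝ) + b) ^ r ≤ 2 ^ (r - 1) * ((a : ℝ) ^ r + (b : ℝ) ^ r) :=
          mod_cast NNReal.rpow_add_le_mul_rpow_add_rpow a b hr1
      _ ≤ _ := by gcongr; exact le_max_right _ _

theorem max_rpow_le_rpow_add_rpow {u v : ℝ} (hu : 0 ≤ u) (hv : 0 ≤ v) (q : ℝ) :
    max u v ^ q ≤ u ^ q + v ^ q := by
  rcases max_choice u v with h | h <;> rw [h]
  · exact le_add_of_nonneg_right (Real.rpow_nonneg hv q)
  · exact le_add_of_nonneg_left (Real.rpow_nonneg hu q)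

theorem max_sub_max_zero_rpow_le (a b c d : ℝ) {q : ℝ} (hq : 0 ≤ q) :
    max (max a b - max c d) 0 ^ q ≤ max (a - c) 0 ^ q + max (b - d) 0 ^ q := by
  have hmax : max (max a b - max c d) 0 ≤ max (max (a - c) 0) (max (b - d) 0) := by
    rw [← sup_sup_distrib_right]
    exact max_le_max_right 0 (max_sub_max_le_max a b c d)
  calc max (max a b - max c d) 0 ^ q ≤ max (max (a - c) 0) (max (b - d) 0) ^ q :=
        Real.rpow_le_rpow (le_max_right _ _) hmax hq
    _ ≤ _ := max_rpow_le_rpow_add_rpow (le_max_right _ _) (le_max_right _ _) q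

namespace MeasureTheory

variable {α : Type*} [MeasurableSpace α] {μ : Measure α}

theorem MemLp.integrable_max_zero_rpow {h : α → ℝ} {q : ℝ} (hq : 0 < q)
    (hh : MemLp h (ENNReal.ofReal q) μ) : Integrable (fun x => max (h x) 0 ^ q) μ := by
  have := hh.pos_part.integrable_norm_rpow (by simpa using hq) (by simp)
  simpa [ENNReal.toReal_ofReal hq.le, abs_of_nonneg] using this

theorem average_nonneg {h : α → ℝ} (h0 : 0 ≤ h) : 0 ≤ ⨍ x, h x ∂μ := by
  rw [average_eq, smul_eq_mul]
  exact mul_nonneg (inv_nonneg.2 measureReal_nonneg) (integral_nonneg h0)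

theorem average_le_average_add_average {h F G : α → ℝ} (h0 : 0 ≤ h)
    (hF : Integrable F μ) (hG : Integrable G μ) (hle : ∀ x, h x ≤ F x + G x) :
    ⨍ x, h x ∂μ ≤ (⨍ x, F x ∂μ) + ⨍ x, G x ∂μ := by
  simp only [average_eq, smul_eq_mul, ← mul_add, ← integral_add hF hG]
  exact mul_le_mul_of_nonneg_left
    (integral_mono_of_nonneg (.of_forall h0) (hF.add hG) (.of_forall hle))
    (inv_nonneg.2 measureReal_nonneg)

/-- The `q`-th power `𝒪(h, c)^q` of the oscillation functional. -/
noncomputable def oscillationPow (μ : Measure α) (Up Um : Set α) (q : ℝ) (h : α → ℝ)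
    (c : ℝ) : ℝ :=
  (⨍ x in Up, max (h x - c) 0 ^ q ∂μ) + ⨍ x in Um, max (c - h x) 0 ^ q ∂μ

variable {Up Um : Set α} {q : ℝ}

theorem oscillationPow_nonneg (h : α → ℝ) (c : ℝ) : 0 ≤ oscillationPow μ Up Um q h c :=
  add_nonneg (average_nonneg fun _ => Real.rpow_nonneg (le_max_right _ _) q)
    (average_nonneg fun _ => Real.rpow_nonneg (le_max_right _ _) q)

theorem oscillationPow_max_le (hUp : μ Up ≠ ⊤) (hUm : μ Um ≠ ⊤) (hq : 0 < q)
    {f g : α → ℝ}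
    (hf : MemLp f (ENNReal.ofReal q) (μ.restrict (Up ∪ Um)))
    (hg : MemLp g (ENNReal.ofReal q) (μ.restrict (Up ∪ Um))) (cf cg : ℝ) :
    oscillationPow μ Up Um q (fun x => max (f x) (g x)) (max cf cg) ≤
      oscillationPow μ Up Um q f cf + oscillationPow μ Up Um q g cg := by
  have : IsFiniteMeasure (μ.restrict Up) := isFiniteMeasure_restrict.2 hUp
  have : IsFiniteMeasure (μ.restrict Um) := isFiniteMeasure_restrict.2 hUm
  have hUp_le : μ.restrict Up ≤ μ.restrict (Up ∪ Um) :=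
    Measure.restrict_mono subset_union_left le_rfl
  have hUm_le : μ.restrict Um ≤ μ.restrict (Up ∪ Um) :=
    Measure.restrict_mono subset_union_right le_rfl
  have h0 : ∀ y : ℝ, 0 ≤ max y 0 ^ q := fun _ => Real.rpow_nonneg (le_max_right _ _) q
  rw [oscillationPow, oscillationPow, oscillationPow, add_add_add_comm]
  exact add_le_add
    (average_le_average_add_average (fun _ => h0 _)
      (((hf.mono_measure hUp_le).sub (memLp_const cf)).integrable_max_zero_rpow hq)
      (((hg.mono_measure hUp_le).sub (memLp_const cg)).integrable_max_zero_rpow hq)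
      fun x => max_sub_max_zero_rpow_le (f x) (g x) cf cg hq.le)
    (average_le_average_add_average (fun _ => h0 _)
      (((memLp_const cf).sub (hf.mono_measure hUm_le)).integrable_max_zero_rpow hq)
      (((memLp_const cg).sub (hg.mono_measure hUm_le)).integrable_max_zero_rpow hq)
      fun x => max_sub_max_zero_rpow_le cf cg (f x) (g x) hq.le)

end MeasureTheory

theorem stmt10_general {n : ℕ} (Up Um : Set (Fin (n+1) → ℝ))
    (hUpfin : volume Up < ⊤) (hUmfin : volume Um < ⊤)
    (q : ℝ) (hq0 : 0 < q)
    (f g : (Fin (n+1) → ℝ) → ℝ)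
    (hf : MemLp f (ENNReal.ofReal q) (volume.restrict (Up ∪ Um)))
    (hg : MemLp g (ENNReal.ofReal q) (volume.restrict (Up ∪ Um)))
    (cf cg : ℝ) :
    ((⨍ x in Up, max (max (f x) (g x) - max cf cg) 0 ^ q) +
      (⨍ x in Um, max (max cf cg - max (f x) (g x)) 0 ^ q)) ^ q⁻¹ ≤
    max 1 (2 ^ (q⁻¹ - 1)) *
      (((⨍ x in Up, max (f x - cf) 0 ^ q) + (⨍ x in Um, max (cf - f x) 0 ^ q)) ^ q⁻¹ +
       ((⨍ x in Up, max (g x - cg) 0 ^ q) + (⨍ x in Um, max (cg - g x) 0 ^ q)) ^ q⁻¹) := by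
  let O := oscillationPow volume Up Um q
  have hq_inv : 0 ≤ q⁻¹ := inv_nonneg.2 hq0.le
  calc O (fun x => max (f x) (g x)) (max cf cg) ^ q⁻¹ ≤ (O f cf + O g cg) ^ q⁻¹ :=
        Real.rpow_le_rpow (oscillationPow_nonneg _ _)
          (oscillationPow_max_le hUpfin.ne hUmfin.ne hq0 hf hg cf cg) hq_inv
    _ ≤ max 1 (2 ^ (q⁻¹ - 1)) * (O f cf ^ q⁻¹ + O g cg ^ q⁻¹) :=
        rpow_add_le_max_mul_rpow_add_rpow (oscillationPow_nonneg _ _)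
          (oscillationPow_nonneg _ _) hq_inv

theorem stmt10 {n : ℕ} (Up Um : Set (Fin (n+1) → ℝ))
    (hUpm : MeasurableSet Up) (hUmm : MeasurableSet Um)
    (hUp0 : 0 < volume Up) (hUm0 : 0 < volume Um)
    (hUpfin : volume Up < ⊤) (hUmfin : volume Um < ⊤)
    (q : ℝ) (hq0 : 0 < q)
    (f g : (Fin (n+1) → ℝ) → ℝ)
    (hf : MemLp f (ENNReal.ofReal q) (volume.restrict (Up ∪ Um)))
    (hg : MemLp g (ENNReal.ofReal q) (volume.restrict (Up ∪ Um)))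
    (cf cg : ℝ) :
    ((⨍ x in Up, max (max (f x) (g x) - max cf cg) 0 ^ q) +
      (⨍ x in Um, max (max cf cg - max (f x) (g x)) 0 ^ q)) ^ q⁻¹ ≤
    max 1 (2 ^ (q⁻¹ - 1)) *
      (((⨍ x in Up, max (f x - cf) 0 ^ q) + (⨍ x in Um, max (cf - f x) 0 ^ q)) ^ q⁻¹ +
       ((⨍ x in Up, max (g x - cg) 0 ^ q) + (⨍ x in Um, max (cg - g x) 0 ^ q)) ^ q⁻¹) :=
  stmt10_general Up Um hUpfin hUmfin q hq0 f g hf hg cf cg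
end
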